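/- For all k ≥ 1: W_{2k-1} = (∏_{j=k}^{1} 2(k-j) ⊕ W_{2j-2}) · (2k-1) and W_{2k} = (∏_{j=k}^{1} 2(k-j) ⊕ W_{2j-1}) · (2k), where ∏_{j=k}^{1} denotes concatenation in the order j = k, k-1, …, 1, and the final factor is the single letter 2k-1 (respectively 2k). (For example, W_5 = W_4 · (2 ⊕ W_2) · (4 ⊕ W_0) · 5.) -/

import Mathlib

/-!
Since `φ(a + 2) = 2 ⊕ φ(a)`, the morphism commutes with the shift `2 ⊕ ·`, and applying `φ` to
`W_2 = W_1 · (2 ⊕ W_0)` gives the recurrence `W_{n+2} = W_{n+1} · (2 ⊕ W_n)`. Unfolding it `k` times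
in its last factor yields
`W_{n+2k} = W_{n+2k-1} · (2 ⊕ W_{n+2k-3}) ⋯ (2(k-1) ⊕ W_{n+1}) · (2k ⊕ W_n)`,
and the theorem is the cases `n = 0` and `n = 1`, where `2k ⊕ W_n` is `2k`, resp. `(2k)(2k+1)`.
-/

/-- The morphism `phi` on the alphabet `ℕ`: `phi (2i) = (2i)(2i+1)` and `phi (2i+1) = (2i+2)`. -/
def phi (a : ℕ) : List ℕ := if a % 2 = 0 then [a, a + 1] else [a + 1]

/-- The finite ZWW words: `W n = phi^n(0)`, so `W 0 = 0`, `W 1 = 01`, `W 2 = 012`, `W 3 = 01223`. -/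
def W (n : ℕ) : List ℕ := (fun w => w.flatMap phi)^[n] [0]

theorem W_zero : W 0 = [0] := rfl

theorem W_succ (n : ℕ) : W (n + 1) = (W n).flatMap phi :=
  Function.iterate_succ_apply' _ n [0]

theorem phi_add_two (a : ℕ) : phi (a + 2) = (phi a).map (· + 2) := by
  unfold phi
  rw [Nat.add_mod_right]
  split_ifs <;> simp

theorem flatMap_phi_map_add_two (w : List ℕ) :
    (w.map (· + 2)).flatMap phi = (w.flatMap phi).map (· + 2) := by
  simp only [List.flatMap_map, List.map_flatMap, phi_add_two]

theorem W_add_two (n : ℕ) : W (n + 2) = W (n + 1) ++ (W n).map (· + 2) := by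
  induction n with
  | zero => rfl
  | succ n ih =>
    calc W (n + 3) = (W (n + 1) ++ (W n).map (· + 2)).flatMap phi := by rw [W_succ, ih]
      _ = W (n + 2) ++ (W (n + 1)).map (· + 2) := by
        rw [List.flatMap_append, flatMap_phi_map_add_two, ← W_succ, ← W_succ]

theorem map_add_two_mul_succ (w : List ℕ) (t : ℕ) :
    w.map (· + 2 * (t + 1)) = (w.map (· + 2 * t)).map (· + 2) := by
  simp only [List.map_map, Function.comp_def, Nat.mul_succ, add_assoc]

theorem W_add_two_mul (n k : ℕ) :
    W (n + 2 * k) =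
      ((List.range k).map (fun t => (W (n + 2 * k - 2 * t - 1)).map (· + 2 * t))).flatten
        ++ (W n).map (· + 2 * k) := by
  induction k with
  | zero => simp
  | succ k ih =>
    have hhead : (W (n + 2 * k + 2 - 2 * 0 - 1)).map (· + 2 * 0) = W (n + 2 * k + 1) := by
      simp
    have htail (t : ℕ) : (W (n + 2 * k + 2 - 2 * (t + 1) - 1)).map (· + 2 * (t + 1)) =
        ((W (n + 2 * k - 2 * t - 1)).map (· + 2 * t)).map (· + 2) := by
      rw [map_add_two_mul_succ]
      congr 3
      omega
    rw [show n + 2 * (k + 1) = n + 2 * k + 2 by ring, W_add_two, ih, List.range_succ_eq_map,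
      List.map_cons, List.flatten_cons, hhead, List.map_map, Function.comp_def]
    simp only [htail, map_add_two_mul_succ, List.map_append, List.map_flatten, List.map_map,
      Function.comp_def, List.append_assoc]

/-- For all `k ≥ 1`:
`W (2k-1) = (∏_{j=k}^{1} 2(k-j) ⊕ W (2j-2)) · (2k-1)` and
`W (2k) = (∏_{j=k}^{1} 2(k-j) ⊕ W (2j-1)) · (2k)`, the concatenations being taken
in the order `j = k, k-1, …, 1` (i.e. over `t = k - j = 0, 1, …, k-1`),
with the final factor beingered the single letter `2k-1` (resp. `2k`). -/
theorem zww_second_factorisation : ∀ k : ℕ, 1 ≤ k →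
    W (2 * k - 1) =
      ((List.range k).map (fun t => (W (2 * k - 2 * t - 2)).map (· + 2 * t))).flatten
        ++ [2 * k - 1] ∧
    W (2 * k) =
      ((List.range k).map (fun t => (W (2 * k - 2 * t - 1)).map (· + 2 * t))).flatten
        ++ [2 * k] := by
  rintro k hk
  obtain ⟨k, rfl⟩ : ∃ m, k = m + 1 := ⟨k - 1, by omega⟩
  have hodd : W (1 + 2 * k) =
      ((List.range k).map (fun t => (W (2 * (k + 1) - 2 * t - 2)).map (· + 2 * t))).flatten
        ++ [2 * k, 2 * k + 1] := by
    rw [W_add_two_mul]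
    congr 1
    · congr 1
      refine List.map_congr_left fun t _ => ?_
      congr 2
      omega
    · simp [W_succ, W_zero, phi, add_comm]
  constructor
  · rw [show 2 * (k + 1) - 1 = 1 + 2 * k by omega, hodd, List.range_succ, List.map_append,
      List.flatten_append]
    simp [show 2 * (k + 1) - 2 * k - 2 = 0 by omega, W_zero, add_comm]
  · simpa [W_zero] using W_add_two_mul 0 (k + 1)
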